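/- For any two tensors Z¹, Z² ∈ SOL(M,Q) with M a T-column sufficient tensor, the cross-complementarity holds: ⟨Z¹, MZ² + Q⟩ = 0 and ⟨Z², MZ¹ + Q⟩ = 0. -/

import Mathlib

open Finset

/-- The contraction product: `(tmul M Z) i = ∑ j, M i j * Z j`. -/
def tmul {m n : ℕ} (M : (Fin m → Fin n) → (Fin m → Fin n) → ℝ)
    (Z : (Fin m → Fin n) → ℝ) : (Fin m → Fin n) → ℝ :=
  fun i => ∑ j : Fin m → Fin n, M i j * Z j

/-- Inner product of tensors. -/
def tinner {m n : ℕ} (A B : (Fin m → Fin n) → ℝ) : ℝ :=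
  ∑ i : Fin m → Fin n, A i * B i

/-- `M` is T-column sufficient. -/
def TColSuff {m n : ℕ} (M : (Fin m → Fin n) → (Fin m → Fin n) → ℝ) : Prop :=
  ∀ Z : (Fin m → Fin n) → ℝ,
    (∀ i, Z i * tmul M Z i ≤ 0) → (∀ i, Z i * tmul M Z i = 0)

/-- `M` is T-column sufficient on the nonnegative orthant. -/
def TColSuffPlus {m n : ℕ} (M : (Fin m → Fin n) → (Fin m → Fin n) → ℝ) : Prop :=
  ∀ Z : (Fin m → Fin n) → ℝ, (∀ i, 0 ≤ Z i) →
    (∀ i, Z i * tmul M Z i ≤ 0) → (∀ i, Z i * tmul M Z i = 0)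

/-- `M` is a T-P tensor. -/
def TP {m n : ℕ} (M : (Fin m → Fin n) → (Fin m → Fin n) → ℝ) : Prop :=
  ∀ Z : (Fin m → Fin n) → ℝ, Z ≠ 0 → ∃ i, 0 < Z i * tmul M Z i

/-- `M` is T-non-degenerate. -/
def TND {m n : ℕ} (M : (Fin m → Fin n) → (Fin m → Fin n) → ℝ) : Prop :=
  ∀ Z : (Fin m → Fin n) → ℝ, Z ≠ 0 → ∃ i, Z i * tmul M Z i ≠ 0

/-- `M` is T-positive semidefinite. -/
def TPSD {m n : ℕ} (M : (Fin m → Fin n) → (Fin m → Fin n) → ℝ) : Prop :=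
  ∀ Z : (Fin m → Fin n) → ℝ, 0 ≤ tinner Z (tmul M Z)

/-- `M` is T-copositive. -/
def TCopositive {m n : ℕ} (M : (Fin m → Fin n) → (Fin m → Fin n) → ℝ) : Prop :=
  ∀ Z : (Fin m → Fin n) → ℝ, (∀ i, 0 ≤ Z i) → 0 ≤ tinner Z (tmul M Z)

/-- `M` is T-semi-positive. -/
def TSemiPos {m n : ℕ} (M : (Fin m → Fin n) → (Fin m → Fin n) → ℝ) : Prop :=
  ∀ Z : (Fin m → Fin n) → ℝ, (∀ i, 0 ≤ Z i) → Z ≠ 0 →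
    ∃ i, 0 < Z i ∧ 0 ≤ tmul M Z i

/-- The solution set of the TLCP. -/
def SOL {m n : ℕ} (M : (Fin m → Fin n) → (Fin m → Fin n) → ℝ)
    (Q : (Fin m → Fin n) → ℝ) : Set ((Fin m → Fin n) → ℝ) :=
  {Z | (∀ i, 0 ≤ Z i) ∧ (∀ i, 0 ≤ tmul M Z i + Q i) ∧
    tinner Z (fun i => tmul M Z i + Q i) = 0}

/-! For `Z1, Z2 ∈ SOL M Q`, the complementarity of each solution turns
`(Z1 - Z2) i * (M (Z1 - Z2)) i` into `-(Z1 i * (M Z2 + Q) i + Z2 i * (M Z1 + Q) i)`, minus a sum of two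
nonnegative cross terms. Column sufficiency forces it to vanish, hence both cross terms vanish. -/

section Complementarity

variable {m n : ℕ} {M : (Fin m → Fin n) → (Fin m → Fin n) → ℝ} {Q Z Z1 Z2 : (Fin m → Fin n) → ℝ}

theorem tmul_sub (M : (Fin m → Fin n) → (Fin m → Fin n) → ℝ) (Z1 Z2 : (Fin m → Fin n) → ℝ) :
    tmul M (Z1 - Z2) = tmul M Z1 - tmul M Z2 := by
  funext i
  simp only [tmul, Pi.sub_apply, mul_sub, sum_sub_distrib]

theorem tinner_eq_zero_iff_of_nonneg {A B : (Fin m → Fin n) → ℝ} (hA : ∀ i, 0 ≤ A i)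
    (hB : ∀ i, 0 ≤ B i) : tinner A B = 0 ↔ ∀ i, A i * B i = 0 := by
  simpa only [tinner, mem_univ, forall_const] using
    sum_eq_zero_iff_of_nonneg (s := univ) fun i _ => mul_nonneg (hA i) (hB i)

theorem mul_eq_zero_of_mem_SOL (hZ : Z ∈ SOL M Q) (i : Fin m → Fin n) :
    Z i * (tmul M Z i + Q i) = 0 :=
  (tinner_eq_zero_iff_of_nonneg hZ.1 hZ.2.1).1 hZ.2.2 i

theorem cross_nonneg_of_mem_SOL (hZ1 : Z1 ∈ SOL M Q) (hZ2 : Z2 ∈ SOL M Q) (i : Fin m → Fin n) :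
    0 ≤ Z1 i * (tmul M Z2 i + Q i) :=
  mul_nonneg (hZ1.1 i) (hZ2.2.1 i)

theorem sub_mul_tmul_sub_of_mem_SOL (hZ1 : Z1 ∈ SOL M Q) (hZ2 : Z2 ∈ SOL M Q)
    (i : Fin m → Fin n) :
    (Z1 - Z2) i * tmul M (Z1 - Z2) i =
      -(Z1 i * (tmul M Z2 i + Q i) + Z2 i * (tmul M Z1 i + Q i)) := by
  rw [tmul_sub, Pi.sub_apply, Pi.sub_apply]
  linear_combination mul_eq_zero_of_mem_SOL hZ1 i + mul_eq_zero_of_mem_SOL hZ2 i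

theorem cross_eq_zero_of_mem_SOL (hM : TColSuff M) (hZ1 : Z1 ∈ SOL M Q) (hZ2 : Z2 ∈ SOL M Q)
    (i : Fin m → Fin n) :
    Z1 i * (tmul M Z2 i + Q i) = 0 ∧ Z2 i * (tmul M Z1 i + Q i) = 0 := by
  have h12 := cross_nonneg_of_mem_SOL hZ1 hZ2 i
  have h21 := cross_nonneg_of_mem_SOL hZ2 hZ1 i
  have hW := hM (Z1 - Z2) (fun j => by
    rw [sub_mul_tmul_sub_of_mem_SOL hZ1 hZ2 j]
    linarith [cross_nonneg_of_mem_SOL hZ1 hZ2 j, cross_nonneg_of_mem_SOL hZ2 hZ1 j]) i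
  rw [sub_mul_tmul_sub_of_mem_SOL hZ1 hZ2 i, neg_eq_zero] at hW
  exact (add_eq_zero_iff_of_nonneg h12 h21).1 hW

end Complementarity

theorem stmt15 {m n : ℕ} (M : (Fin m → Fin n) → (Fin m → Fin n) → ℝ)
    (hM : TColSuff M) (Q Z1 Z2 : (Fin m → Fin n) → ℝ)
    (hZ1 : Z1 ∈ SOL M Q) (hZ2 : Z2 ∈ SOL M Q) :
    tinner Z1 (fun i => tmul M Z2 i + Q i) = 0 ∧
      tinner Z2 (fun i => tmul M Z1 i + Q i) = 0 :=
  ⟨(tinner_eq_zero_iff_of_nonneg hZ1.1 hZ2.2.1).2 fun i => (cross_eq_zero_of_mem_SOL hM hZ1 hZ2 i).1,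
    (tinner_eq_zero_iff_of_nonneg hZ2.1 hZ1.2.1).2 fun i => (cross_eq_zero_of_mem_SOL hM hZ1 hZ2 i).2⟩
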